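/- arXiv:1204.5810 — 5 statements merged into one kernel-verified Lean document; each statement's English description precedes it below -/
import Mathlib

section
/- In the packing LP setting, let ε ∈ (0,1], let p ∈ ℝ^m with p ≥ 0, and let x = x(p). Suppose (i) a_i(x) ≤ B for all i ∈ {1,…,m}, and (ii) a_i(x) ≥ (1 − 3ε)B for every i with p_i > 0. Then ∑_{t=1}^n π_t x_t ≥ (1 − 3ε)·OPT. -/
/-!
Weak duality with the prices `p`: for any `z ∈ [0,1]ⁿ`, splitting
`π_t = (π_t - p·aᵗ) + p·aᵗ` bounds `∑ π_t z_t` by the reduced profits of `x(p)`, which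
collects exactly the positive reduced profits, plus the priced load `∑ p_i ∑ a_ti z_t`.
Applied to `z = (1 - 3ε) y` for a feasible `y`, the priced load is at most
`(1 - 3ε) B p_i ≤ p_i a_i(x)` on every priced row, and reduced profits plus priced
occupation of `x` add up to the value of `x`.
-/

open Finset

noncomputable section

/-- The linear classification induced by dual prices `p`. -/
def classif {n m : ℕ} (π : Fin n → ℝ) (a : Fin n → Fin m → ℝ) (p : Fin m → ℝ) :
    Finset (Fin n) :=
  Finset.univ.filter fun t => ∑ i, p i * a t i < π t

/-- Occupation of row `i` by the index set `x`. -/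
def occ {n m : ℕ} (a : Fin n → Fin m → ℝ) (i : Fin m) (x : Finset (Fin n)) : ℝ :=
  ∑ t ∈ x, a t i

/-- Optimal value of the offline packing LP. -/
def OPTval (n m : ℕ) (π : Fin n → ℝ) (a : Fin n → Fin m → ℝ) (B : ℝ) : ℝ :=
  sSup {v : ℝ | ∃ y : Fin n → ℝ, (∀ t, y t ∈ Set.Icc (0:ℝ) 1) ∧
    (∀ i, ∑ t, a t i * y t ≤ B) ∧ v = ∑ t, π t * y t}

theorem Real.mul_sSup_le_of_nonneg {s : Set ℝ} {c V : ℝ} (hc : 0 ≤ c) (hs : s.Nonempty)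
    (h : ∀ v ∈ s, c * v ≤ V) : c * sSup s ≤ V := by
  rw [← smul_eq_mul, ← Real.sSup_smul_of_nonneg hc]
  exact csSup_le hs.smul_set (by rintro _ ⟨v, hv, rfl⟩; exact h v hv)

section PackingLP

variable {n m : ℕ} {π : Fin n → ℝ} {a : Fin n → Fin m → ℝ} {B : ℝ}

/-- `OPTval n m π a B` is, definitionally, the supremum of this set. -/
def feasibleValues (n m : ℕ) (π : Fin n → ℝ) (a : Fin n → Fin m → ℝ) (B : ℝ) :
    Set ℝ :=
  {v : ℝ | ∃ y : Fin n → ℝ, (∀ t, y t ∈ Set.Icc (0:ℝ) 1) ∧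
    (∀ i, ∑ t, a t i * y t ≤ B) ∧ v = ∑ t, π t * y t}

theorem zero_mem_feasibleValues (hB : 0 ≤ B) : 0 ∈ feasibleValues n m π a B :=
  ⟨0, fun _ => ⟨le_rfl, zero_le_one⟩, fun _ => by simpa using hB, by simp⟩

theorem bddAbove_feasibleValues : BddAbove (feasibleValues n m π a B) := by
  refine ⟨∑ t, |π t|, ?_⟩
  rintro _ ⟨y, hy, -, rfl⟩
  refine sum_le_sum fun t _ => ?_
  calc π t * y t ≤ |π t| * y t := mul_le_mul_of_nonneg_right (le_abs_self _) (hy t).1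
    _ ≤ |π t| := mul_le_of_le_one_right (abs_nonneg _) (hy t).2

theorem OPTval_nonneg (hB : 0 ≤ B) : 0 ≤ OPTval n m π a B :=
  le_csSup bddAbove_feasibleValues (zero_mem_feasibleValues hB)

theorem mul_OPTval_le {c V : ℝ} (hB : 0 ≤ B) (hc : 0 ≤ c)
    (h : ∀ y : Fin n → ℝ, (∀ t, y t ∈ Set.Icc (0:ℝ) 1) → (∀ i, ∑ t, a t i * y t ≤ B) →
      c * ∑ t, π t * y t ≤ V) :
    c * OPTval n m π a B ≤ V :=
  Real.mul_sSup_le_of_nonneg hc ⟨0, zero_mem_feasibleValues hB⟩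
    fun _ ⟨y, hy, hyB, hv⟩ => hv ▸ h y hy hyB

variable (π a) (p : Fin m → ℝ)

theorem sum_price_mul_load (z : Fin n → ℝ) :
    ∑ i, p i * ∑ t, a t i * z t = ∑ t, (∑ i, p i * a t i) * z t := by
  simp only [mul_sum, sum_mul]
  rw [sum_comm]
  simp only [mul_assoc]

theorem sum_price_mul_occ (x : Finset (Fin n)) :
    ∑ i, p i * occ a i x = ∑ t ∈ x, ∑ i, p i * a t i := by
  simp only [occ, mul_sum]
  exact sum_comm

theorem sum_mul_le_sum_classif_add_sum_price_mul_load {z : Fin n → ℝ}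
    (hz : ∀ t, z t ∈ Set.Icc (0:ℝ) 1) :
    ∑ t, π t * z t ≤
      ∑ t ∈ classif π a p, (π t - ∑ i, p i * a t i) + ∑ i, p i * ∑ t, a t i * z t := by
  have hreduced : ∑ t, (π t - ∑ i, p i * a t i) * z t ≤
      ∑ t ∈ classif π a p, (π t - ∑ i, p i * a t i) := by
    rw [classif, sum_filter]
    refine sum_le_sum fun t _ => ?_
    split_ifs with ht
    · exact mul_le_of_le_one_right (by linarith) (hz t).2
    · exact mul_nonpos_of_nonpos_of_nonneg (by linarith) (hz t).1
  calc ∑ t, π t * z t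
      = ∑ t, (π t - ∑ i, p i * a t i) * z t + ∑ t, (∑ i, p i * a t i) * z t := by
        rw [← sum_add_distrib]; congr 1; ext t; ring
    _ ≤ _ := by rw [sum_price_mul_load]; gcongr

variable {π a p}

theorem mul_sum_le_sum_classif {c : ℝ} (hc : c ∈ Set.Icc (0:ℝ) 1) (hp : ∀ i, 0 ≤ p i)
    (hsat : ∀ i, 0 < p i → c * B ≤ occ a i (classif π a p)) {y : Fin n → ℝ}
    (hy : ∀ t, y t ∈ Set.Icc (0:ℝ) 1) (hyB : ∀ i, ∑ t, a t i * y t ≤ B) :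
    c * ∑ t, π t * y t ≤ ∑ t ∈ classif π a p, π t := by
  have hcy : ∀ t, c * y t ∈ Set.Icc (0:ℝ) 1 := fun t =>
    ⟨mul_nonneg hc.1 (hy t).1, mul_le_one₀ hc.2 (hy t).1 (hy t).2⟩
  have hload : ∀ i, p i * ∑ t, a t i * (c * y t) ≤ p i * occ a i (classif π a p) := by
    intro i
    rcases (hp i).eq_or_lt with hpi | hpi
    · simp [← hpi]
    · calc p i * ∑ t, a t i * (c * y t) = p i * (c * ∑ t, a t i * y t) := by
            rw [mul_sum (a := c)]; exact congrArg _ (sum_congr rfl fun t _ => by ring)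
        _ ≤ p i * (c * B) :=
            mul_le_mul_of_nonneg_left (mul_le_mul_of_nonneg_left (hyB i) hc.1) (hp i)
        _ ≤ p i * occ a i (classif π a p) := mul_le_mul_of_nonneg_left (hsat i hpi) (hp i)
  calc c * ∑ t, π t * y t = ∑ t, π t * (c * y t) := by
        rw [mul_sum]; congr 1; ext t; ring
    _ ≤ ∑ t ∈ classif π a p, (π t - ∑ i, p i * a t i) +
          ∑ i, p i * occ a i (classif π a p) :=
        (sum_mul_le_sum_classif_add_sum_price_mul_load π a p hcy).trans
          (add_le_add_right (sum_le_sum fun i _ => hload i) _)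
    _ = ∑ t ∈ classif π a p, π t := by
        rw [sum_price_mul_occ, ← sum_add_distrib]; simp

end PackingLP

theorem approximate_complementary_slackness_general
    (n m : ℕ)
    (π : Fin n → ℝ) (hπ : ∀ t, 0 ≤ π t)
    (a : Fin n → Fin m → ℝ)
    (B : ℝ) (hB : 0 < B)
    (ε : ℝ) (hε : ε ∈ Set.Ioc (0:ℝ) 1)
    (p : Fin m → ℝ) (hp : ∀ i, 0 ≤ p i)
    (hsat : ∀ i, 0 < p i → (1 - 3 * ε) * B ≤ occ a i (classif π a p)) :
    (1 - 3 * ε) * OPTval n m π a B ≤ ∑ t ∈ classif π a p, π t := by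
  rcases le_or_gt 0 (1 - 3 * ε) with hc | hc
  · have hc1 : 1 - 3 * ε ≤ 1 := by linarith [hε.1]
    exact mul_OPTval_le hB.le hc fun _ hy hyB =>
      mul_sum_le_sum_classif ⟨hc, hc1⟩ hp hsat hy hyB
  · calc (1 - 3 * ε) * OPTval n m π a B ≤ 0 :=
          mul_nonpos_of_nonpos_of_nonneg hc.le (OPTval_nonneg hB.le)
      _ ≤ ∑ t ∈ classif π a p, π t := sum_nonneg fun t _ => hπ t

/-- Approximate complementary slackness implies near-optimal value: if the
classification `x = x(p)` with `p ≥ 0` is feasible and nearly saturates every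
budget whose price is positive, then its value is at least `(1−3ε)·OPT`. -/
theorem approximate_complementary_slackness
    (n m : ℕ) (hn : 1 ≤ n) (hm : 1 ≤ m)
    (π : Fin n → ℝ) (hπ : ∀ t, 0 ≤ π t)
    (a : Fin n → Fin m → ℝ) (ha : ∀ t i, a t i ∈ Set.Icc (0:ℝ) 1)
    (ha0 : ∀ t, a t ≠ 0)
    (B : ℝ) (hB : 0 < B)
    (ε : ℝ) (hε : ε ∈ Set.Ioc (0:ℝ) 1)
    (p : Fin m → ℝ) (hp : ∀ i, 0 ≤ p i)
    (hfeas : ∀ i, occ a i (classif π a p) ≤ B)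
    (hsat : ∀ i, 0 < p i → (1 - 3 * ε) * B ≤ occ a i (classif π a p)) :
    (1 - 3 * ε) * OPTval n m π a B ≤ ∑ t ∈ classif π a p, π t :=
  approximate_complementary_slackness_general n m π hπ a B hB ε hε p hp hsat

end
end

section
/- In the packing LP setting, let p ∈ ℝ^m with p ≥ 0 and let x = x(p). Then x is an optimal solution of the modified LP: maximize ∑_{t=1}^n π_t y_t subject to ∑_{t=1}^n a^t_i y_t ≤ a_i(x) for every i ∈ {1,…,m} and y ∈ [0,1]^n. In particular, x maximizes the Lagrangian L(p,y) = ∑_t π_t y_t − ∑_{i=1}^m p_i (∑_t a^t_i y_t − a_i(x)) over y ∈ [0,1]^n. -/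
open Finset

noncomputable section

section Lagrangian

variable {ι κ : Type*} [Fintype ι] [Fintype κ]

/-- The Lagrangian `L(p, y)` of the packing LP `max π·y` subject to `∑ₜ aₜᵢ yₜ ≤ bᵢ`. -/
def lagrangian (π : ι → ℝ) (a : ι → κ → ℝ) (b p : κ → ℝ) (y : ι → ℝ) : ℝ :=
  ∑ t, π t * y t - ∑ i, p i * (∑ t, a t i * y t - b i)

theorem lagrangian_eq_sum_reducedCost_mul_add (π : ι → ℝ) (a : ι → κ → ℝ) (b p : κ → ℝ)
    (y : ι → ℝ) :
    lagrangian π a b p y = ∑ t, (π t - ∑ i, p i * a t i) * y t + ∑ i, p i * b i := by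
  have hswap : ∑ i, p i * ∑ t, a t i * y t = ∑ t, (∑ i, p i * a t i) * y t := by
    simp_rw [Finset.mul_sum, Finset.sum_mul, mul_assoc]
    exact Finset.sum_comm
  simp only [lagrangian, mul_sub, sub_mul, Finset.sum_sub_distrib, hswap]
  ring

theorem mul_le_mul_ite_pos {r y : ℝ} (hy : y ∈ Set.Icc (0 : ℝ) 1) :
    r * y ≤ r * if 0 < r then 1 else 0 := by
  split_ifs with hr
  · simpa using mul_le_mul_of_nonneg_left hy.2 hr.le
  · simpa using mul_nonpos_of_nonpos_of_nonneg (not_lt.mp hr) hy.1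

theorem lagrangian_le_lagrangian_ite {π : ι → ℝ} {a : ι → κ → ℝ} {b p : κ → ℝ} {y : ι → ℝ}
    (hy : ∀ t, y t ∈ Set.Icc (0 : ℝ) 1) :
    lagrangian π a b p y ≤
      lagrangian π a b p fun t => if ∑ i, p i * a t i < π t then 1 else 0 := by
  simp only [lagrangian_eq_sum_reducedCost_mul_add]
  refine add_le_add_left (Finset.sum_le_sum fun t _ => ?_) _
  simpa only [sub_pos] using mul_le_mul_ite_pos (r := π t - ∑ i, p i * a t i) (hy t)

/-- Weak duality, with complementary slackness coming from `x` meeting every constraint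
with equality. -/
theorem sum_mul_le_of_lagrangian_le {π : ι → ℝ} {a : ι → κ → ℝ} {b p : κ → ℝ} {x y : ι → ℝ}
    (hp : ∀ i, 0 ≤ p i) (hx : ∀ i, ∑ t, a t i * x t = b i) (hy : ∀ i, ∑ t, a t i * y t ≤ b i)
    (hL : lagrangian π a b p y ≤ lagrangian π a b p x) :
    ∑ t, π t * y t ≤ ∑ t, π t * x t := by
  have hpenalty : ∑ i, p i * (∑ t, a t i * y t - b i) ≤ 0 :=
    Finset.sum_nonpos fun i _ => mul_nonpos_of_nonneg_of_nonpos (hp i) (sub_nonpos.mpr (hy i))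
  simp only [lagrangian, hx, sub_self, mul_zero, Finset.sum_const_zero, sub_zero] at hL
  linarith

end Lagrangian

theorem sum_mul_ite_mem_eq_occ {n m : ℕ} (a : Fin n → Fin m → ℝ) (i : Fin m)
    (x : Finset (Fin n)) : ∑ t, a t i * (if t ∈ x then 1 else 0) = occ a i x := by
  simp only [mul_ite, mul_one, mul_zero, occ, Finset.sum_ite_mem, Finset.univ_inter]

theorem classification_optimal_for_modified_LP_general
    (n m : ℕ)
    (π : Fin n → ℝ)
    (a : Fin n → Fin m → ℝ)
    (p : Fin m → ℝ) (hp : ∀ i, 0 ≤ p i) :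
    let x : Finset (Fin n) := classif π a p
    let xvec : Fin n → ℝ := fun t => if t ∈ x then 1 else 0
    ((∀ t, xvec t ∈ Set.Icc (0:ℝ) 1) ∧
      (∀ i, ∑ t, a t i * xvec t ≤ occ a i x) ∧
      (∀ y : Fin n → ℝ, (∀ t, y t ∈ Set.Icc (0:ℝ) 1) →
        (∀ i, ∑ t, a t i * y t ≤ occ a i x) →
        ∑ t, π t * y t ≤ ∑ t, π t * xvec t)) ∧
    (∀ y : Fin n → ℝ, (∀ t, y t ∈ Set.Icc (0:ℝ) 1) →
      (∑ t, π t * y t) - ∑ i, p i * ((∑ t, a t i * y t) - occ a i x) ≤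
        (∑ t, π t * xvec t) - ∑ i, p i * ((∑ t, a t i * xvec t) - occ a i x)) := by
  intro x xvec
  have hocc (i : Fin m) : ∑ t, a t i * xvec t = occ a i x := sum_mul_ite_mem_eq_occ a i x
  have hlag (y : Fin n → ℝ) (hy : ∀ t, y t ∈ Set.Icc (0:ℝ) 1) :
      lagrangian π a (occ a · x) p y ≤ lagrangian π a (occ a · x) p xvec := by
    simpa [xvec, x, classif] using lagrangian_le_lagrangian_ite (b := (occ a · x)) hy
  refine ⟨⟨fun t => ?_, fun i => (hocc i).le, fun y hy hfeas => ?_⟩, hlag⟩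
  · by_cases ht : t ∈ x <;> simp [xvec, ht]
  · exact sum_mul_le_of_lagrangian_le hp hocc hfeas (hlag y hy)

/-- `x(p)` is an optimal solution of the modified LP whose right-hand sides are
its own budget occupations `a_i(x(p))`, and in particular it maximizes the
Lagrangian `L(p, ·)` over `[0,1]^n`. -/
theorem classification_optimal_for_modified_LP
    (n m : ℕ) (hn : 1 ≤ n) (hm : 1 ≤ m)
    (π : Fin n → ℝ) (hπ : ∀ t, 0 ≤ π t)
    (a : Fin n → Fin m → ℝ) (ha : ∀ t i, a t i ∈ Set.Icc (0:ℝ) 1)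
    (ha0 : ∀ t, a t ≠ 0)
    (p : Fin m → ℝ) (hp : ∀ i, 0 ≤ p i) :
    let x : Finset (Fin n) := classif π a p
    let xvec : Fin n → ℝ := fun t => if t ∈ x then 1 else 0
    ((∀ t, xvec t ∈ Set.Icc (0:ℝ) 1) ∧
      (∀ i, ∑ t, a t i * xvec t ≤ occ a i x) ∧
      (∀ y : Fin n → ℝ, (∀ t, y t ∈ Set.Icc (0:ℝ) 1) →
        (∀ i, ∑ t, a t i * y t ≤ occ a i x) →
        ∑ t, π t * y t ≤ ∑ t, π t * xvec t)) ∧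
    (∀ y : Fin n → ℝ, (∀ t, y t ∈ Set.Icc (0:ℝ) 1) →
      (∑ t, π t * y t) - ∑ i, p i * ((∑ t, a t i * y t) - occ a i x) ≤
        (∑ t, π t * xvec t) - ∑ i, p i * ((∑ t, a t i * xvec t) - occ a i x)) :=
  classification_optimal_for_modified_LP_general n m π a p hp

end
end

section
/- In the packing LP setting with general position, let ε ∈ (0,1] with εn an integer and assume ε²B ≥ m. Let S ⊆ {1,…,n} with |S| = εn. Suppose p ∈ ℝ^m with p ≥ 0 and α = (α_t)_{t∈S} with α ≥ 0 satisfy p·a^t + α_t ≥ π_t for all t ∈ S, and suppose x* ∈ [0,1]^S satisfies ∑_{t∈S} a^t_i x*_t ≤ ε(1−ε)B for all i, together with the complementary slackness conditions: x*_t = 0 whenever p·a^t + α_t > π_t; x*_t = 1 whenever α_t > 0; and ∑_{t∈S} a^t_i x*_t = ε(1−ε)B for every i with p_i > 0. Then a_i^S(x(p)) ≤ (1 − ε)B for all i ∈ {1,…,m}, and a_i^S(x(p)) ≥ (1 − 2ε)B for every i with p_i > 0. -/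
/-!
Complementary slackness forces `x*_t = 1` on every sampled `t` accepted by `x(p)`, because
there `π_t > p·a^t` and dual feasibility make `α_t > 0`; hence `x(p)` uses no more of any
resource on the sample than `x*` does. Conversely, `x*` can be positive on a sampled `t`
rejected by `x(p)` only at a tie `π_t = p·a^t`. General position allows at most
`m ≤ ε²B` ties, so on a row with `p_i > 0`, where `x*` uses exactly `ε(1-ε)B`,
`x(p)` uses at least `ε(1-ε)B - ε²B`.
-/

open Finset

noncomputable section

theorem Finset.sum_le_card_of_le_one_of_eq_zero {ι : Type*} {s T : Finset ι} {g : ι → ℝ}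
    (hle : ∀ t ∈ s, g t ≤ 1) (hzero : ∀ t ∈ s, t ∉ T → g t = 0) :
    ∑ t ∈ s, g t ≤ #T := by
  classical
  calc ∑ t ∈ s, g t = ∑ t ∈ s with t ∈ T, g t :=
        (sum_filter_of_ne fun t ht hg => not_not.mp fun hT => hg (hzero t ht hT)).symm
    _ ≤ #{t ∈ s | t ∈ T} • (1 : ℝ) :=
        sum_le_card_nsmul _ _ _ fun t ht => hle t (mem_filter.mp ht).1
    _ ≤ #T := by
        rw [nsmul_one]
        exact_mod_cast card_le_card fun t ht => (mem_filter.mp ht).2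

section SampledLP

variable {n m : ℕ} {π : Fin n → ℝ} {a : Fin n → Fin m → ℝ} {p : Fin m → ℝ}
  {S : Finset (Fin n)} {α xstar : Fin n → ℝ}

@[simp]
theorem mem_classif {t : Fin n} : t ∈ classif π a p ↔ ∑ i, p i * a t i < π t := by
  simp [classif]

theorem xstar_eq_one_of_mem_classif (hdual : ∀ t ∈ S, π t ≤ ∑ i, p i * a t i + α t)
    (hcs2 : ∀ t ∈ S, 0 < α t → xstar t = 1) {t : Fin n} (ht : t ∈ classif π a p ∩ S) :
    xstar t = 1 := by
  obtain ⟨htc, htS⟩ := mem_inter.mp ht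
  exact hcs2 t htS (by linarith [hdual t htS, mem_classif.mp htc])

theorem eq_of_not_mem_classif_of_xstar_ne_zero (hα : ∀ t ∈ S, 0 ≤ α t)
    (hcs1 : ∀ t ∈ S, π t < ∑ i, p i * a t i + α t → xstar t = 0)
    {t : Fin n} (htS : t ∈ S) (htc : t ∉ classif π a p) (hx : xstar t ≠ 0) :
    π t = ∑ i, p i * a t i := by
  have htight : ¬ π t < ∑ i, p i * a t i + α t := fun h => hx (hcs1 t htS h)
  rw [mem_classif] at htc
  linarith [hα t htS]

theorem sum_classif_inter_eq_sum_mul_xstar (hdual : ∀ t ∈ S, π t ≤ ∑ i, p i * a t i + α t)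
    (hcs2 : ∀ t ∈ S, 0 < α t → xstar t = 1) (i : Fin m) :
    ∑ t ∈ classif π a p ∩ S, a t i = ∑ t ∈ classif π a p ∩ S, a t i * xstar t :=
  sum_congr rfl fun t ht => by rw [xstar_eq_one_of_mem_classif hdual hcs2 ht, mul_one]

theorem sum_classif_inter_le_sum_mul_xstar (ha : ∀ t i, a t i ∈ Set.Icc (0:ℝ) 1)
    (hx01 : ∀ t ∈ S, xstar t ∈ Set.Icc (0:ℝ) 1)
    (hdual : ∀ t ∈ S, π t ≤ ∑ i, p i * a t i + α t)
    (hcs2 : ∀ t ∈ S, 0 < α t → xstar t = 1) (i : Fin m) :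
    ∑ t ∈ classif π a p ∩ S, a t i ≤ ∑ t ∈ S, a t i * xstar t := by
  rw [sum_classif_inter_eq_sum_mul_xstar hdual hcs2]
  exact sum_le_sum_of_subset_of_nonneg inter_subset_right
    fun t htS _ => mul_nonneg (ha t i).1 (hx01 t htS).1

theorem sum_mul_xstar_le_sum_classif_inter_add_card_ties
    (ha : ∀ t i, a t i ∈ Set.Icc (0:ℝ) 1) (hx01 : ∀ t ∈ S, xstar t ∈ Set.Icc (0:ℝ) 1)
    (hα : ∀ t ∈ S, 0 ≤ α t)
    (hdual : ∀ t ∈ S, π t ≤ ∑ i, p i * a t i + α t)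
    (hcs1 : ∀ t ∈ S, π t < ∑ i, p i * a t i + α t → xstar t = 0)
    (hcs2 : ∀ t ∈ S, 0 < α t → xstar t = 1) (i : Fin m) :
    ∑ t ∈ S, a t i * xstar t ≤
      ∑ t ∈ classif π a p ∩ S, a t i + #{t | π t = ∑ i, p i * a t i} := by
  have hties :
      ∑ t ∈ S \ classif π a p, a t i * xstar t ≤ #{t | π t = ∑ i, p i * a t i} := by
    refine sum_le_card_of_le_one_of_eq_zero (fun t ht => ?_) (fun t ht hT => ?_)
    · have hxt := hx01 t (mem_sdiff.mp ht).1
      exact mul_le_one₀ (ha t i).2 hxt.1 hxt.2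
    · obtain ⟨htS, htc⟩ := mem_sdiff.mp ht
      by_contra hne
      exact hT (mem_filter.mpr ⟨mem_univ t,
        eq_of_not_mem_classif_of_xstar_ne_zero hα hcs1 htS htc (right_ne_zero_of_mul hne)⟩)
  rw [← sum_inter_add_sum_sdiff S (classif π a p), inter_comm,
    ← sum_classif_inter_eq_sum_mul_xstar hdual hcs2]
  linarith

end SampledLP

theorem sampled_complementary_slackness_general
    (n m : ℕ)
    (π : Fin n → ℝ)
    (a : Fin n → Fin m → ℝ) (ha : ∀ t i, a t i ∈ Set.Icc (0:ℝ) 1)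
    (B : ℝ)
    (hgen : ∀ p : Fin m → ℝ,
      (Finset.univ.filter fun t => π t = ∑ i, p i * a t i).card ≤ m)
    (ε : ℝ) (hε : ε ∈ Set.Ioc (0:ℝ) 1)
    (hεB : (m : ℝ) ≤ ε ^ 2 * B)
    (S : Finset (Fin n))
    (p : Fin m → ℝ)
    (α : Fin n → ℝ) (hα : ∀ t ∈ S, 0 ≤ α t)
    (hdual : ∀ t ∈ S, π t ≤ ∑ i, p i * a t i + α t)
    (xstar : Fin n → ℝ) (hx01 : ∀ t ∈ S, xstar t ∈ Set.Icc (0:ℝ) 1)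
    (hxfeas : ∀ i, ∑ t ∈ S, a t i * xstar t ≤ ε * (1 - ε) * B)
    (hcs1 : ∀ t ∈ S, π t < ∑ i, p i * a t i + α t → xstar t = 0)
    (hcs2 : ∀ t ∈ S, 0 < α t → xstar t = 1)
    (hcs3 : ∀ i, 0 < p i → ∑ t ∈ S, a t i * xstar t = ε * (1 - ε) * B) :
    (∀ i, (1 / ε) * ∑ t ∈ classif π a p ∩ S, a t i ≤ (1 - ε) * B) ∧
    (∀ i, 0 < p i → (1 - 2 * ε) * B ≤ (1 / ε) * ∑ t ∈ classif π a p ∩ S, a t i) := by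
  have hε0 : 0 < ε := hε.1
  refine ⟨fun i => ?_, fun i hpi => ?_⟩
  · have hle := sum_classif_inter_le_sum_mul_xstar ha hx01 hdual hcs2 i
    rw [one_div, inv_mul_le_iff₀ hε0]
    linarith [hxfeas i]
  · have hle := sum_mul_xstar_le_sum_classif_inter_add_card_ties ha hx01 hα hdual hcs1 hcs2 i
    have hties : (#{t | π t = ∑ i, p i * a t i} : ℝ) ≤ m := by exact_mod_cast hgen p
    rw [one_div, le_inv_mul_iff₀ hε0]
    linarith [hcs3 i hpi]

/-- Sampled complementary slackness: if `(p, α)` is dual feasible for the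
sampled LP and is in complementary slackness with a primal feasible `x*`, then
the classification `x(p)` satisfies `a_i^S(x(p)) ≤ (1−ε)B` for all rows `i`,
and `a_i^S(x(p)) ≥ (1−2ε)B` for every row with `p_i > 0`. -/
theorem sampled_complementary_slackness
    (n m : ℕ) (hn : 1 ≤ n) (hm : 1 ≤ m)
    (π : Fin n → ℝ) (hπ : ∀ t, 0 ≤ π t)
    (a : Fin n → Fin m → ℝ) (ha : ∀ t i, a t i ∈ Set.Icc (0:ℝ) 1)
    (ha0 : ∀ t, a t ≠ 0)
    (B : ℝ) (hB : 0 < B)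
    (hgen : ∀ p : Fin m → ℝ,
      (Finset.univ.filter fun t => π t = ∑ i, p i * a t i).card ≤ m)
    (ε : ℝ) (hε : ε ∈ Set.Ioc (0:ℝ) 1)
    (k : ℕ) (hk : (k : ℝ) = ε * n)
    (hεB : (m : ℝ) ≤ ε ^ 2 * B)
    (S : Finset (Fin n)) (hS : S.card = k)
    (p : Fin m → ℝ) (hp : ∀ i, 0 ≤ p i)
    (α : Fin n → ℝ) (hα : ∀ t ∈ S, 0 ≤ α t)
    (hdual : ∀ t ∈ S, π t ≤ ∑ i, p i * a t i + α t)
    (xstar : Fin n → ℝ) (hx01 : ∀ t ∈ S, xstar t ∈ Set.Icc (0:ℝ) 1)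
    (hxfeas : ∀ i, ∑ t ∈ S, a t i * xstar t ≤ ε * (1 - ε) * B)
    (hcs1 : ∀ t ∈ S, π t < ∑ i, p i * a t i + α t → xstar t = 0)
    (hcs2 : ∀ t ∈ S, 0 < α t → xstar t = 1)
    (hcs3 : ∀ i, 0 < p i → ∑ t ∈ S, a t i * xstar t = ε * (1 - ε) * B) :
    (∀ i, (1 / ε) * ∑ t ∈ classif π a p ∩ S, a t i ≤ (1 - ε) * B) ∧
    (∀ i, 0 < p i → (1 - 2 * ε) * B ≤ (1 / ε) * ∑ t ∈ classif π a p ∩ S, a t i) :=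
  sampled_complementary_slackness_general n m π a ha B hgen ε hε hεB S p α hα hdual xstar hx01
    hxfeas hcs1 hcs2 hcs3

end
end

section
/- Let Y_1,…,Y_n be real numbers in [0,1], let 1 ≤ s ≤ n, let μ = (1/n)∑_{i=1}^n Y_i, let S be a uniformly random s-element subset of {1,…,n}, and let Y_S = ∑_{i∈S} Y_i. Then for every τ > 0, Pr( |Y_S − sμ| ≥ τ ) ≤ 2·exp( −τ² / (4sμ + τ) ). -/
/-!
Chernoff's method with a Poisson-type moment generating function. For `a i = exp (t * Y i)`
the sum of `exp (t * Y_S)` over the `s`-subsets `S` is the elementary symmetric polynomial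
`e_s(a)`, and Maclaurin's inequality `e_s(a) ≤ C(n, s) * (mean a) ^ s` together with the
convexity bound `exp (t * y) ≤ 1 + y * (exp t - 1)` on `[0, 1]` gives
`𝔼 exp (t * Y_S) ≤ exp (v * (exp t - 1))` with `v = s * μ`, as if `Y_S` were Poisson of
mean `v`. Taking `t = log (1 + τ / v)` (with `log (1 + u) ≥ 2u / (u + 2)`) bounds the upper
tail by `exp (-τ² / (2v + τ))`, and `t = τ / v` (with `exp (-x) ≤ 1 - x + x² / 2`) bounds the
lower tail by `exp (-τ² / (2v))`.
-/

open Finset Real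

namespace Finset

variable {ι R : Type*}

/-- This is `(T.val.map a).esymm k` (`Finset.esymm_map_val`), indexed by `T` so that indices can
be inserted and erased. -/
def esymm [CommSemiring R] (T : Finset ι) (a : ι → R) (k : ℕ) : R :=
  ∑ S ∈ T.powersetCard k, ∏ i ∈ S, a i

section CommSemiring

variable [CommSemiring R] [DecidableEq ι] (a : ι → R)

theorem esymm_insert_succ {j : ι} {U : Finset ι} (hj : j ∉ U) (k : ℕ) :
    (insert j U).esymm a (k + 1) = U.esymm a (k + 1) + a j * U.esymm a k := by
  simp only [esymm, ← esymm_map_val, insert_val_of_notMem hj, Multiset.map_cons, Multiset.esymm,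
    Multiset.powersetCard_cons, Multiset.map_add, Multiset.sum_add, Multiset.map_map,
    Function.comp_def, Multiset.prod_cons, Multiset.sum_map_mul_left]

theorem sum_esymm_erase (T : Finset ι) (k : ℕ) :
    ∑ i ∈ T, (T.erase i).esymm a k = (#T - k) • T.esymm a k := by
  simp only [esymm, smul_sum]
  rw [sum_comm' (t' := T.powersetCard k) (s' := fun S => T \ S)]
  · refine sum_congr rfl fun S hS => ?_
    rw [mem_powersetCard] at hS
    rw [sum_const, card_sdiff_of_subset hS.1, hS.2]
  · simp only [mem_powersetCard, subset_erase, mem_sdiff]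
    tauto

end CommSemiring

theorem sum_mul_esymm_erase [CommRing R] [DecidableEq ι] (a : ι → R) (T : Finset ι) (k : ℕ) :
    ∑ i ∈ T, a i * (T.erase i).esymm a k = (k + 1) • T.esymm a (k + 1) := by
  have hsplit : ∀ i ∈ T,
      T.esymm a (k + 1) = (T.erase i).esymm a (k + 1) + a i * (T.erase i).esymm a k := by
    intro i hi
    rw [← esymm_insert_succ a (notMem_erase i T), insert_erase hi]
  have hsum := sum_congr rfl hsplit
  rw [sum_const, sum_add_distrib, sum_esymm_erase] at hsum
  rcases le_or_gt (k + 1) #T with hk | hk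
  · obtain ⟨d, hd⟩ := Nat.exists_eq_add_of_le' hk
    rw [hd, Nat.add_sub_cancel, add_smul] at hsum
    exact (add_left_cancel hsum).symm
  · rw [esymm, powersetCard_eq_empty.2 hk, sum_empty] at hsum ⊢
    simpa using hsum.symm

section OrderedSemiring

variable [CommSemiring R] [PartialOrder R] [IsOrderedRing R] {a : ι → R}

theorem esymm_nonneg (ha : ∀ i, 0 ≤ a i) (T : Finset ι) (k : ℕ) : 0 ≤ T.esymm a k :=
  sum_nonneg fun _ _ => prod_nonneg fun i _ => ha i

theorem esymm_erase_le_esymm_erase [DecidableEq ι] (ha : ∀ i, 0 ≤ a i) {T : Finset ι}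
    {i j : ι} (hi : i ∈ T) (hj : j ∈ T) (hij : a i ≤ a j) (k : ℕ) :
    (T.erase j).esymm a k ≤ (T.erase i).esymm a k := by
  rcases eq_or_ne i j with rfl | hne
  · rfl
  cases k with
  | zero => simp [esymm]
  | succ k =>
    have hTi : T.erase i = insert j ((T.erase i).erase j) :=
      (insert_erase (mem_erase.2 ⟨hne.symm, hj⟩)).symm
    have hTj : T.erase j = insert i ((T.erase i).erase j) := by
      rw [erase_right_comm, insert_erase (mem_erase.2 ⟨hne, hi⟩)]
    rw [hTi, hTj, esymm_insert_succ a (notMem_erase j _),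
      esymm_insert_succ a (by simp [hne])]
    gcongr
    exact esymm_nonneg ha _ k

end OrderedSemiring

/-- Maclaurin's inequality. -/
theorem esymm_le_choose_mul_mean_pow [Field R] [LinearOrder R] [IsStrictOrderedRing R]
    [DecidableEq ι] {a : ι → R} (ha : ∀ i, 0 ≤ a i) (T : Finset ι) (k : ℕ) :
    T.esymm a k ≤ (#T).choose k * ((∑ i ∈ T, a i) / #T) ^ k := by
  set m := (∑ i ∈ T, a i) / #T
  have hm : 0 ≤ m := div_nonneg (sum_nonneg fun i _ => ha i) (Nat.cast_nonneg _)
  induction k with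
  | zero => simp [esymm]
  | succ k ih =>
    rcases lt_or_ge #T (k + 1) with hk | hk
    · rw [esymm, powersetCard_eq_empty.2 hk, sum_empty]
      positivity
    have hT : (0 : R) < #T := by exact_mod_cast (Nat.succ_pos k).trans_le hk
    have hanti : AntivaryOn a (fun i => (T.erase i).esymm a k) T := by
      intro i hi j hj hlt
      by_contra! h
      exact hlt.not_ge (esymm_erase_le_esymm_erase ha hi hj h.le k)
    -- Chebyshev: `(k+1) e_{k+1}(T) = ∑ a i e_k(T \ i) ≤ m ∑ e_k(T \ i) = m (|T| - k) e_k(T)`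
    have cheb := hanti.card_mul_sum_le_sum_mul_sum
    rw [sum_mul_esymm_erase, sum_esymm_erase, nsmul_eq_mul, nsmul_eq_mul,
      Nat.cast_sub (k.le_succ.trans hk), ← div_mul_cancel₀ (∑ i ∈ T, a i) hT.ne'] at cheb
    have hchoose : ((#T).choose (k + 1) : R) * (k + 1) = (#T).choose k * (#T - k) := by
      rw [← Nat.cast_sub (k.le_succ.trans hk)]
      exact_mod_cast Nat.choose_succ_right_eq #T k
    have hstep : ((k : R) + 1) * T.esymm a (k + 1) ≤ m * (#T - k) * T.esymm a k :=
      le_of_mul_le_mul_left (by push_cast at cheb; linarith) hT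
    refine le_of_mul_le_mul_left ?_ (by positivity : (0 : R) < k + 1)
    calc ((k : R) + 1) * T.esymm a (k + 1) ≤ m * (#T - k) * T.esymm a k := hstep
      _ ≤ m * (#T - k) * ((#T).choose k * m ^ k) := by
        have hkT : (k : R) ≤ #T := by exact_mod_cast k.le_succ.trans hk
        gcongr
      _ = (k + 1) * ((#T).choose (k + 1) * m ^ (k + 1)) := by
        rw [pow_succ]; linear_combination (-m ^ k * m) * hchoose

end Finset

namespace Real

theorem exp_mul_le_one_add_mul_exp_sub_one {y : ℝ} (hy : y ∈ Set.Icc 0 1) (t : ℝ) :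
    exp (t * y) ≤ 1 + y * (exp t - 1) :=
  calc exp (t * y) = exp ((1 - y) • 0 + y • t) := by simp [mul_comm]
    _ ≤ (1 - y) • exp 0 + y • exp t :=
      convexOn_exp.2 (Set.mem_univ _) (Set.mem_univ _) (by linarith [hy.2]) hy.1 (by ring)
    _ = 1 + y * (exp t - 1) := by simp only [smul_eq_mul, exp_zero]; ring

theorem exp_neg_le_one_sub_add_sq_div_two {x : ℝ} (hx : 0 ≤ x) :
    exp (-x) ≤ 1 - x + x ^ 2 / 2 := by
  have hq : 0 < 1 - x + x ^ 2 / 2 := by nlinarith [sq_nonneg (x - 1)]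
  rw [exp_neg, inv_le_comm₀ (exp_pos x) hq, inv_le_iff_one_le_mul₀ hq]
  -- `(1 - x + x²/2) (1 + x + x²/2) = 1 + x⁴/4`
  nlinarith [quadratic_le_exp_of_nonneg hx, pow_nonneg hx 4]

end Real

theorem sum_exp_mul_div_card_le {ι : Type*} (T : Finset ι) {Y : ι → ℝ}
    (hY : ∀ i ∈ T, Y i ∈ Set.Icc 0 1) (t : ℝ) :
    (∑ i ∈ T, exp (t * Y i)) / #T ≤ exp ((∑ i ∈ T, Y i) / #T * (exp t - 1)) :=
  calc (∑ i ∈ T, exp (t * Y i)) / #T ≤ (∑ i ∈ T, (1 + Y i * (exp t - 1))) / #T := by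
        gcongr with i hi
        exact exp_mul_le_one_add_mul_exp_sub_one (hY i hi) t
    _ ≤ 1 + (∑ i ∈ T, Y i) / #T * (exp t - 1) := by
        rw [sum_add_distrib, ← sum_mul, sum_const, nsmul_one, add_div, mul_div_right_comm]
        gcongr
        exact div_self_le_one _
    _ ≤ exp ((∑ i ∈ T, Y i) / #T * (exp t - 1)) := by
        linarith [add_one_le_exp ((∑ i ∈ T, Y i) / #T * (exp t - 1))]

theorem sum_powersetCard_exp_mul_sum_le {ι : Type*} [DecidableEq ι] (T : Finset ι)
    {Y : ι → ℝ} (hY : ∀ i ∈ T, Y i ∈ Set.Icc 0 1) (k : ℕ) (t : ℝ) :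
    ∑ S ∈ T.powersetCard k, exp (t * ∑ i ∈ S, Y i) ≤
      (#T).choose k * exp (k * ((∑ i ∈ T, Y i) / #T) * (exp t - 1)) := by
  have hesymm : ∑ S ∈ T.powersetCard k, exp (t * ∑ i ∈ S, Y i) =
      T.esymm (fun i => exp (t * Y i)) k := by
    simp only [esymm, mul_sum, exp_sum]
  rw [hesymm, mul_assoc, exp_nat_mul]
  refine (esymm_le_choose_mul_mean_pow (fun i => (exp_pos _).le) T k).trans ?_
  gcongr
  exact sum_exp_mul_div_card_le T hY t

theorem card_filter_le_exp_mul_sum_exp {β : Type*} (P : Finset β) (X : β → ℝ) (c : ℝ)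
    {t : ℝ} (ht : 0 ≤ t) :
    #(P.filter fun S => c ≤ X S) ≤ exp (-(t * c)) * ∑ S ∈ P, exp (t * X S) := by
  rw [exp_neg, ← div_eq_inv_mul, le_div_iff₀ (exp_pos _), ← nsmul_eq_mul]
  calc #(P.filter fun S => c ≤ X S) • exp (t * c)
      ≤ ∑ S ∈ P.filter fun S => c ≤ X S, exp (t * X S) :=
        card_nsmul_le_sum _ _ _ fun S hS => by gcongr; exact (mem_filter.1 hS).2
    _ ≤ ∑ S ∈ P, exp (t * X S) :=
        sum_le_sum_of_subset_of_nonneg (filter_subset _ _) fun _ _ _ => (exp_pos _).le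

section PoissonTails

variable {β : Type*} {P : Finset β} {X : β → ℝ} {v τ : ℝ}

theorem card_filter_add_le_of_sum_exp_le (hv : 0 < v) (hτ : 0 < τ)
    (hmgf : ∀ t, ∑ S ∈ P, exp (t * X S) ≤ #P * exp (v * (exp t - 1))) :
    #(P.filter fun S => v + τ ≤ X S) ≤ #P * exp (-(τ ^ 2 / (2 * v + τ))) := by
  set t := log (1 + τ / v)
  have hexp : exp t = 1 + τ / v := exp_log (by positivity)
  have hlog : 2 * τ / (τ + 2 * v) ≤ t := by
    have h := le_log_one_add_of_nonneg (div_pos hτ hv).le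
    rwa [show 2 * (τ / v) / (τ / v + 2) = 2 * τ / (τ + 2 * v) by field_simp] at h
  have hexponent : v * (exp t - 1) - t * (v + τ) ≤ -(τ ^ 2 / (2 * v + τ)) := by
    rw [hexp]
    have : 2 * τ / (τ + 2 * v) * (v + τ) ≤ t * (v + τ) := by gcongr
    have : v * (1 + τ / v - 1) = τ := by field_simp; ring
    have : τ - 2 * τ / (τ + 2 * v) * (v + τ) = -(τ ^ 2 / (2 * v + τ)) := by field_simp; ring
    linarith
  calc (#(P.filter fun S => v + τ ≤ X S) : ℝ)
      ≤ exp (-(t * (v + τ))) * ∑ S ∈ P, exp (t * X S) :=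
        card_filter_le_exp_mul_sum_exp P X _ (log_nonneg (le_add_of_nonneg_right (by positivity)))
    _ ≤ exp (-(t * (v + τ))) * (#P * exp (v * (exp t - 1))) := by gcongr; exact hmgf t
    _ = #P * exp (v * (exp t - 1) - t * (v + τ)) := by
        rw [mul_left_comm, ← exp_add]; congr 2; ring
    _ ≤ #P * exp (-(τ ^ 2 / (2 * v + τ))) := by gcongr

theorem card_filter_le_sub_of_sum_exp_le (hv : 0 < v) (hτ : 0 < τ)
    (hmgf : ∀ t, ∑ S ∈ P, exp (t * X S) ≤ #P * exp (v * (exp t - 1))) :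
    #(P.filter fun S => X S ≤ v - τ) ≤ #P * exp (-(τ ^ 2 / (2 * v))) := by
  set t := τ / v
  have hexponent : t * v + v * (exp (-t) - 1) - t * τ ≤ -(τ ^ 2 / (2 * v)) := by
    have h := exp_neg_le_one_sub_add_sq_div_two (div_pos hτ hv).le
    have : t * v + v * (1 - t + t ^ 2 / 2 - 1) - t * τ = -(τ ^ 2 / (2 * v)) := by
      simp only [t]; field_simp; ring
    nlinarith
  have hfilter : (P.filter fun S => X S ≤ v - τ) = P.filter fun S => τ - v ≤ -X S :=
    filter_congr fun S _ => by constructor <;> intro h <;> linarith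
  calc (#(P.filter fun S => X S ≤ v - τ) : ℝ)
      ≤ exp (-(t * (τ - v))) * ∑ S ∈ P, exp (-t * X S) := by
        rw [hfilter]
        simpa only [mul_neg, neg_mul] using
          card_filter_le_exp_mul_sum_exp P (-X ·) _ (div_pos hτ hv).le
    _ ≤ exp (-(t * (τ - v))) * (#P * exp (v * (exp (-t) - 1))) := by gcongr; exact hmgf (-t)
    _ = #P * exp (t * v + v * (exp (-t) - 1) - t * τ) := by
        rw [mul_left_comm, ← exp_add]; congr 2; ring
    _ ≤ #P * exp (-(τ ^ 2 / (2 * v))) := by gcongr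

theorem card_filter_le_abs_sub_le_of_sum_exp_le (hv : 0 < v) (hτ : 0 < τ)
    (hmgf : ∀ t, ∑ S ∈ P, exp (t * X S) ≤ #P * exp (v * (exp t - 1))) :
    #(P.filter fun S => τ ≤ |X S - v|) ≤ 2 * #P * exp (-(τ ^ 2 / (4 * v + τ))) := by
  classical
  have hsplit : (P.filter fun S => τ ≤ |X S - v|) =
      (P.filter fun S => v + τ ≤ X S) ∪ P.filter fun S => X S ≤ v - τ := by
    rw [← filter_or]
    exact filter_congr fun S _ => by
      rw [le_abs]; apply or_congr <;> constructor <;> intro <;> linarith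
  have hupper : exp (-(τ ^ 2 / (2 * v + τ))) ≤ exp (-(τ ^ 2 / (4 * v + τ))) := by
    gcongr; linarith
  have hlower : exp (-(τ ^ 2 / (2 * v))) ≤ exp (-(τ ^ 2 / (4 * v + τ))) := by
    gcongr; linarith
  calc (#(P.filter fun S => τ ≤ |X S - v|) : ℝ)
      ≤ #(P.filter fun S => v + τ ≤ X S) + #(P.filter fun S => X S ≤ v - τ) := by
        rw [hsplit]; exact_mod_cast card_union_le _ _
    _ ≤ #P * exp (-(τ ^ 2 / (4 * v + τ))) + #P * exp (-(τ ^ 2 / (4 * v + τ))) := by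
        gcongr
        · exact (card_filter_add_le_of_sum_exp_le hv hτ hmgf).trans (by gcongr)
        · exact (card_filter_le_sub_of_sum_exp_le hv hτ hmgf).trans (by gcongr)
    _ = 2 * #P * exp (-(τ ^ 2 / (4 * v + τ))) := by ring

end PoissonTails

theorem sum_eq_zero_of_card_mul_mean_eq_zero {ι : Type*} [Fintype ι] {Y : ι → ℝ}
    (hY : ∀ i, 0 ≤ Y i) {S : Finset ι} (h : #S * ((∑ i, Y i) / Fintype.card ι) = 0) :
    ∑ i ∈ S, Y i = 0 := by
  rcases mul_eq_zero.1 h with hS | hmean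
  · rw [card_eq_zero.1 (Nat.cast_eq_zero.1 hS), sum_empty]
  refine le_antisymm ?_ (sum_nonneg fun i _ => hY i)
  calc ∑ i ∈ S, Y i ≤ ∑ i, Y i := sum_le_univ_sum_of_nonneg hY
    _ = 0 := by
      rcases div_eq_zero_iff.1 hmean with h | h
      · exact h
      · rw [univ_eq_empty_iff.2 (Fintype.card_eq_zero_iff.1 (Nat.cast_eq_zero.1 h)), sum_empty]

theorem bernstein_sampling_without_replacement_general
    (n s : ℕ)
    (Y : Fin n → ℝ) (hY : ∀ i, Y i ∈ Set.Icc (0:ℝ) 1)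
    (μ : ℝ) (hμ : μ = (∑ i, Y i) / n)
    (τ : ℝ) (hτ : 0 < τ) :
    ((((Finset.univ : Finset (Fin n)).powersetCard s).filter
        (fun S => τ ≤ |(∑ i ∈ S, Y i) - s * μ|)).card : ℝ) /
      ((((Finset.univ : Finset (Fin n)).powersetCard s).card : ℝ)) ≤
      2 * Real.exp (-(τ ^ 2 / (4 * s * μ + τ))) := by
  set P := (univ : Finset (Fin n)).powersetCard s
  refine div_le_of_le_mul₀ (Nat.cast_nonneg _) (by positivity) ?_
  have hμ0 : 0 ≤ μ := hμ ▸ div_nonneg (sum_nonneg fun i _ => (hY i).1) n.cast_nonneg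
  rcases (mul_nonneg s.cast_nonneg hμ0).eq_or_lt with hv | hv
  · rw [filter_false_of_mem fun S hS => ?_, card_empty, Nat.cast_zero]
    · exact mul_nonneg (by positivity) (Nat.cast_nonneg _)
    have hmean : (#S : ℝ) * ((∑ i, Y i) / Fintype.card (Fin n)) = 0 := by
      rw [(mem_powersetCard.1 hS).2, Fintype.card_fin, ← hμ, hv]
    rw [sum_eq_zero_of_card_mul_mean_eq_zero (fun i => (hY i).1) hmean, ← hv, sub_zero,
      abs_zero]
    exact hτ.not_ge
  have hmgf : ∀ t, ∑ S ∈ P, exp (t * ∑ i ∈ S, Y i) ≤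
      #P * exp (s * μ * (exp t - 1)) := by
    intro t
    rw [card_powersetCard, card_univ, Fintype.card_fin]
    simpa only [card_univ, Fintype.card_fin, ← hμ] using
      sum_powersetCard_exp_mul_sum_le univ (fun i _ => hY i) s t
  calc _ ≤ 2 * #P * exp (-(τ ^ 2 / (4 * (s * μ) + τ))) :=
        card_filter_le_abs_sub_le_of_sum_exp_le hv hτ hmgf
    _ = _ := by ring_nf

/-- Bernstein's inequality for sampling without replacement, with the variance
bounded by twice the mean (valid for values in `[0,1]`): if `S` is a uniformly
random `s`-element subset of `{1,…,n}` then
`Pr(|Y_S − sμ| ≥ τ) ≤ 2 exp(−τ²/(4sμ + τ))`. -/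
theorem bernstein_sampling_without_replacement
    (n s : ℕ) (hs1 : 1 ≤ s) (hsn : s ≤ n)
    (Y : Fin n → ℝ) (hY : ∀ i, Y i ∈ Set.Icc (0:ℝ) 1)
    (μ : ℝ) (hμ : μ = (∑ i, Y i) / n)
    (τ : ℝ) (hτ : 0 < τ) :
    ((((Finset.univ : Finset (Fin n)).powersetCard s).filter
        (fun S => τ ≤ |(∑ i ∈ S, Y i) - s * μ|)).card : ℝ) /
      ((((Finset.univ : Finset (Fin n)).powersetCard s).card : ℝ)) ≤
      2 * Real.exp (-(τ ^ 2 / (4 * s * μ + τ))) :=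
  bernstein_sampling_without_replacement_general n s Y hY μ hμ τ hτ
end

section
/- In the packing LP setting with general position, let i ∈ {1,…,m} and let p ∈ ℝ^m with p ≥ 0 be such that a_i(x(p)) > B. Then there exists λ ≥ 0 such that, setting q = p + λ·e_i (where e_i is the i-th standard basis vector), one has x(q) ⊆ x(p) and B ≤ a_i(x(q)) ≤ B + m. -/
/-!
Along the ray `p + κ e_i` an item `t` stays in `x(p + κ e_i)` exactly while `κ a^t_i` is below its
slack `π_t - p·a^t`, so `κ ↦ a_i(x(p + κ e_i))` is a nonincreasing step function that can only
jump down at the thresholds `(π_t - p·a^t) / a^t_i`. Take `λ` to be the largest threshold (or `0`)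
at which the occupation still exceeds `B`, and `ν > λ` the next threshold of an item of
`x(p + λ e_i)`. The items lost between `λ` and `ν` all lie on the hyperplane
`π_t = (p + ν e_i)·a^t`, so by general position there are at most `m` of them, each of weight at
most `1`; hence the occupation at `λ` exceeds the one at `ν`, which is at most `B`, by at most `m`.
-/

open Finset

noncomputable section

theorem sum_le_sum_add_card_sdiff {ι : Type*} [DecidableEq ι] {r : ι → ℝ} {x y : Finset ι}
    (hyx : y ⊆ x) (hr : ∀ t, r t ≤ 1) : ∑ t ∈ x, r t ≤ ∑ t ∈ y, r t + #(x \ y) := by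
  rw [← sum_sdiff hyx, add_comm]
  gcongr
  simpa using sum_le_sum fun t (_ : t ∈ x \ y) => hr t

section Ray

variable {ι : Type*} [Fintype ι] (r s : ι → ℝ)

def active (κ : ℝ) : Finset ι :=
  univ.filter fun t => κ * r t < s t

variable {r s}

theorem mem_active {κ : ℝ} {t : ι} : t ∈ active r s κ ↔ κ * r t < s t := by
  simp [active]

theorem active_anti (hr : ∀ t, 0 ≤ r t) : Antitone (active r s) := by
  intro κ μ hκμ t ht
  rw [mem_active] at ht ⊢
  nlinarith [hr t]

theorem sdiff_active_subset_ties [DecidableEq ι] (hr : ∀ t, 0 ≤ r t) {κ ν : ℝ}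
    (hν : ∀ t ∈ active r s κ, 0 < r t → ν ≤ s t / r t) :
    active r s κ \ active r s ν ⊆ univ.filter fun t => s t = ν * r t := by
  intro t ht
  obtain ⟨hκ, hνt⟩ := mem_sdiff.1 ht
  rw [mem_active] at hκ hνt
  have hrt : 0 < r t := (hr t).lt_of_ne fun h => by rw [← h] at hκ hνt; linarith
  have := (le_div_iff₀ hrt).1 (hν t (mem_active.2 hκ) hrt)
  simp only [mem_filter, mem_univ, true_and]
  linarith

theorem exists_sum_active_mem_Icc [DecidableEq ι] {m : ℕ} {B : ℝ}
    (hr : ∀ t, r t ∈ Set.Icc (0 : ℝ) 1) (hB : 0 ≤ B)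
    (hties : ∀ κ, #(univ.filter fun t => s t = κ * r t) ≤ m)
    (h0 : B < ∑ t ∈ active r s 0, r t) :
    ∃ lam : ℝ, 0 ≤ lam ∧ B ≤ ∑ t ∈ active r s lam, r t ∧
      ∑ t ∈ active r s lam, r t ≤ B + m := by
  set F : ℝ → ℝ := fun κ => ∑ t ∈ active r s κ, r t
  set levels : Finset ℝ :=
    (insert 0 ((univ.filter (0 < r ·)).image fun t => s t / r t)).filter
      fun κ => 0 ≤ κ ∧ B < F κ
  have h0mem : (0 : ℝ) ∈ levels := by simp [levels, F, h0]
  set lam := levels.max' ⟨0, h0mem⟩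
  obtain ⟨hlam0, hlamB⟩ := (mem_filter.1 (levels.max'_mem ⟨0, h0mem⟩)).2
  obtain ⟨u, hu, hru⟩ : ∃ u ∈ active r s lam, 0 < r u := by
    by_contra! h
    exact (hB.trans_lt hlamB).not_ge (sum_nonpos h)
  obtain ⟨t₀, ht₀, hmin⟩ := exists_min_image ((active r s lam).filter (0 < r ·))
    (fun t => s t / r t) ⟨u, mem_filter.2 ⟨hu, hru⟩⟩
  obtain ⟨ht₀lam, hrt₀⟩ := mem_filter.1 ht₀
  set ν := s t₀ / r t₀
  have hlamν : lam < ν := (lt_div_iff₀ hrt₀).2 (mem_active.1 ht₀lam)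
  have hFν : F ν ≤ B := by
    by_contra! h
    have hν : ν ∈ levels := by
      simp only [levels, mem_filter, mem_insert, mem_image, mem_univ, true_and]
      exact ⟨Or.inr ⟨t₀, hrt₀, rfl⟩, hlam0.trans hlamν.le, h⟩
    exact (levels.le_max' ν hν).not_gt hlamν
  have hdrop : #(active r s lam \ active r s ν) ≤ m :=
    (card_le_card (sdiff_active_subset_ties (fun t => (hr t).1)
      fun t ht hrt => hmin t (mem_filter.2 ⟨ht, hrt⟩))).trans (hties ν)
  refine ⟨lam, hlam0, hlamB.le, ?_⟩
  calc F lam ≤ F ν + #(active r s lam \ active r s ν) :=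
        sum_le_sum_add_card_sdiff (active_anti (fun t => (hr t).1) hlamν.le) fun t => (hr t).2
    _ ≤ B + m := add_le_add hFν (by exact_mod_cast hdrop)

end Ray

theorem sum_add_smul_single_mul {m : ℕ} (p x : Fin m → ℝ) (i : Fin m) (κ : ℝ) :
    ∑ j, (p + κ • (Pi.single i 1 : Fin m → ℝ)) j * x j = ∑ j, p j * x j + κ * x i := by
  simp [add_mul, sum_add_distrib, Pi.single_apply, ite_mul]

theorem classif_add_smul_single {n m : ℕ} (π : Fin n → ℝ) (a : Fin n → Fin m → ℝ)
    (p : Fin m → ℝ) (i : Fin m) (κ : ℝ) :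
    classif π a (p + κ • (Pi.single i 1 : Fin m → ℝ)) =
      active (a · i) (fun t => π t - ∑ j, p j * a t j) κ := by
  ext t
  simp only [classif, mem_filter, mem_univ, true_and, mem_active, sum_add_smul_single_mul]
  constructor <;> intro h <;> linarith

theorem price_raise_lands_near_budget_general
    (n m : ℕ)
    (π : Fin n → ℝ)
    (a : Fin n → Fin m → ℝ) (ha : ∀ t i, a t i ∈ Set.Icc (0:ℝ) 1)
    (B : ℝ) (hB : 0 < B)
    (hgen : ∀ p : Fin m → ℝ,
      (Finset.univ.filter fun t => π t = ∑ i, p i * a t i).card ≤ m)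
    (i : Fin m) (p : Fin m → ℝ)
    (hbig : B < occ a i (classif π a p)) :
    ∃ lam : ℝ, 0 ≤ lam ∧
      classif π a (p + lam • (Pi.single i 1 : Fin m → ℝ)) ⊆ classif π a p ∧
      B ≤ occ a i (classif π a (p + lam • (Pi.single i 1 : Fin m → ℝ))) ∧
      occ a i (classif π a (p + lam • (Pi.single i 1 : Fin m → ℝ))) ≤ B + m := by
  have hclassif := classif_add_smul_single π a p i
  have hclassif0 : classif π a p = active (a · i) (fun t => π t - ∑ j, p j * a t j) 0 := by
    simpa using hclassif 0
  have hties (κ : ℝ) :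
      #(univ.filter fun t => π t - ∑ j, p j * a t j = κ * a t i) ≤ m := by
    convert hgen (p + κ • Pi.single i 1) using 3 with t
    rw [sum_add_smul_single_mul, sub_eq_iff_eq_add']
  rw [occ, hclassif0] at hbig
  obtain ⟨lam, hlam, hlo, hhi⟩ :=
    exists_sum_active_mem_Icc (fun t => ha t i) hB.le hties hbig
  refine ⟨lam, hlam, ?_, ?_, ?_⟩
  · rw [hclassif, hclassif0]
    exact active_anti (fun t => (ha t i).1) hlam
  · rwa [occ, hclassif]
  · rwa [occ, hclassif]

/-- Raising the `i`-th price: under the general position assumption, if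
`a_i(x(p)) > B` one can increase the `i`-th coordinate of `p` by some `λ ≥ 0`
so that the new classification is contained in `x(p)` and its `i`-th occupation
lands in `[B, B + m]`. -/
theorem price_raise_lands_near_budget
    (n m : ℕ) (hn : 1 ≤ n) (hm : 1 ≤ m)
    (π : Fin n → ℝ) (hπ : ∀ t, 0 ≤ π t)
    (a : Fin n → Fin m → ℝ) (ha : ∀ t i, a t i ∈ Set.Icc (0:ℝ) 1)
    (ha0 : ∀ t, a t ≠ 0)
    (B : ℝ) (hB : 0 < B)
    (hgen : ∀ p : Fin m → ℝ,
      (Finset.univ.filter fun t => π t = ∑ i, p i * a t i).card ≤ m)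
    (i : Fin m) (p : Fin m → ℝ) (hp : ∀ j, 0 ≤ p j)
    (hbig : B < occ a i (classif π a p)) :
    ∃ lam : ℝ, 0 ≤ lam ∧
      classif π a (p + lam • (Pi.single i 1 : Fin m → ℝ)) ⊆ classif π a p ∧
      B ≤ occ a i (classif π a (p + lam • (Pi.single i 1 : Fin m → ℝ))) ∧
      occ a i (classif π a (p + lam • (Pi.single i 1 : Fin m → ℝ))) ≤ B + m :=
  price_raise_lands_near_budget_general n m π a ha B hB hgen i p hbig

end
end
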